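/- arXiv:2009.03296 — 4 statements merged into one kernel-verified Lean document; each statement's English description precedes it below -/
import Mathlib

section
/- For all real b > 0, the integral of (sin x / x)^2 over [0, b] is strictly greater than the integral of (sin x / x)^2 over [b, 2b]. -/
open Real

noncomputable def sincSq : ℝ → ℝ := fun x => if x = 0 then (1:ℝ) else (Real.sin x / x) ^ 2

lemma mul_cos_lt_sin {t : ℝ} (h0 : 0 < t) (hπ : t < π) : t * Real.cos t < Real.sin t := by
  rcases lt_or_ge t (π / 2) with h | h
  · have h1 : t < Real.tan t := Real.lt_tan h0 h
    have hc : 0 < Real.cos t := Real.cos_pos_of_mem_Ioo ⟨by linarith [Real.pi_pos], h⟩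
    rw [Real.tan_eq_sin_div_cos, lt_div_iff₀ hc] at h1
    linarith
  · have hs : 0 < Real.sin t := Real.sin_pos_of_pos_of_lt_pi h0 hπ
    have hc : Real.cos t ≤ 0 := Real.cos_nonpos_of_pi_div_two_le_of_le h (by linarith [Real.pi_pos])
    nlinarith

lemma sin_div_strictAnti {x y : ℝ} (hx : 0 < x) (hxy : x < y) (hy : y ≤ π) :
    Real.sin y / y < Real.sin x / x := by
  have key : StrictAntiOn (fun t : ℝ => Real.sin t / t) (Set.Icc x y) := by
    apply strictAntiOn_of_deriv_neg (convex_Icc x y)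
    · apply ContinuousOn.div Real.continuousOn_sin continuousOn_id
      intro t ht
      exact ne_of_gt (lt_of_lt_of_le hx ht.1)
    · intro t ht
      rw [interior_Icc] at ht
      have ht0 : 0 < t := hx.trans ht.1
      have hd : HasDerivAt (fun t : ℝ => Real.sin t / t)
          ((Real.cos t * t - Real.sin t * 1) / t ^ 2) t :=
        (Real.hasDerivAt_sin t).div (hasDerivAt_id t) (ne_of_gt ht0)
      rw [hd.deriv]
      apply div_neg_of_neg_of_pos
      · have := mul_cos_lt_sin ht0 (lt_of_lt_of_le ht.2 hy)
        nlinarith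
      · positivity
  exact key (Set.left_mem_Icc.mpr hxy.le) (Set.right_mem_Icc.mpr hxy.le) hxy

lemma sincSq_continuous : Continuous sincSq := by
  rw [continuous_iff_continuousAt]
  intro x
  rcases eq_or_ne x 0 with rfl | hx
  · have h1 : Filter.Tendsto (fun y : ℝ => Real.sin y / y) (nhdsWithin 0 {(0:ℝ)}ᶜ) (nhds 1) := by
      have h := Real.hasDerivAt_sin 0
      rw [hasDerivAt_iff_tendsto_slope] at h
      simp only [Real.cos_zero] at h
      refine h.congr (fun y => ?_)
      simp [slope_def_field, Real.sin_zero]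
    have h2 : Filter.Tendsto sincSq (nhdsWithin 0 {(0:ℝ)}ᶜ) (nhds 1) := by
      have : Filter.Tendsto (fun y : ℝ => (Real.sin y / y) ^ 2) (nhdsWithin 0 {(0:ℝ)}ᶜ)
          (nhds 1) := by simpa using h1.pow 2
      refine this.congr' ?_
      filter_upwards [self_mem_nhdsWithin] with y hy
      have : y ≠ 0 := hy
      simp [sincSq, this]
    have h3 : Filter.Tendsto sincSq (pure (0:ℝ)) (nhds 1) := by
      have : sincSq 0 = 1 := by simp [sincSq]
      simpa [this] using (tendsto_pure_nhds sincSq 0)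
    have : Filter.Tendsto sincSq (nhds (0:ℝ)) (nhds 1) := by
      rw [← nhdsNE_sup_pure (0:ℝ)]
      exact Filter.Tendsto.sup h2 h3
    have h0 : sincSq 0 = 1 := by simp [sincSq]
    rw [ContinuousAt, h0]
    exact this
  · have : ContinuousAt (fun y : ℝ => (Real.sin y / y) ^ 2) x :=
      ((Real.continuous_sin.continuousAt).div continuousAt_id hx).pow 2
    refine this.congr ?_
    filter_upwards [isOpen_compl_singleton.mem_nhds hx] with y hy
    have : y ≠ 0 := hy
    simp [sincSq, this]

lemma sincSq_nonneg (x : ℝ) : 0 ≤ sincSq x := by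
  unfold sincSq; split <;> positivity

theorem sinc_sq_integral_front_gt_back (b : ℝ) (hb : 0 < b) :
    (∫ x in (0:ℝ)..b, (if x = 0 then (1:ℝ) else (Real.sin x / x) ^ 2)) >
      ∫ x in b..(2 * b), (if x = 0 then (1:ℝ) else (Real.sin x / x) ^ 2) := by
  have hc : Continuous sincSq := sincSq_continuous
  have hint : ∀ a c : ℝ, IntervalIntegrable sincSq MeasureTheory.volume a c :=
    fun a c => hc.intervalIntegrable a c
  show (∫ x in (0:ℝ)..b, sincSq x) > ∫ x in b..(2*b), sincSq x
  rcases le_or_gt (2 * b) π with hcase | hcase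
  · -- small b : pointwise decreasing on [0, π]
    have key : ∫ x in b..(2*b), sincSq x = ∫ x in (0:ℝ)..b, sincSq (x + b) := by
      rw [intervalIntegral.integral_comp_add_right]
      norm_num [two_mul]
    rw [key, gt_iff_lt]
    apply intervalIntegral.integral_lt_integral_of_continuousOn_of_le_of_exists_lt hb
      (Continuous.continuousOn (by fun_prop : Continuous fun x : ℝ => sincSq (x + b)))
      hc.continuousOn
    · intro x hx
      have hx0 : 0 < x := hx.1
      have hsq : (Real.sin (x+b) / (x+b)) ^ 2 < (Real.sin x / x) ^ 2 := by
        have hlt : Real.sin (x+b) / (x+b) < Real.sin x / x :=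
          sin_div_strictAnti hx0 (by linarith) (by linarith [hx.2])
        have hnn : 0 ≤ Real.sin (x+b) / (x+b) := by
          apply div_nonneg _ (by linarith)
          exact Real.sin_nonneg_of_nonneg_of_le_pi (by linarith) (by linarith [hx.2])
        exact pow_lt_pow_left₀ hlt hnn (by norm_num)
      show sincSq (x + b) ≤ sincSq x
      simp only [sincSq, if_neg (ne_of_gt hx0), if_neg (by positivity : x + b ≠ 0)]
      exact hsq.le
    · refine ⟨b/2, ⟨by linarith, by linarith⟩, ?_⟩
      have hx0 : (0:ℝ) < b/2 := by linarith
      show sincSq (b/2 + b) < sincSq (b/2)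
      simp only [sincSq, if_neg (ne_of_gt hx0), if_neg (by positivity : b/2 + b ≠ 0)]
      have hlt : Real.sin (b/2+b) / (b/2+b) < Real.sin (b/2) / (b/2) :=
        sin_div_strictAnti hx0 (by linarith) (by linarith)
      have hnn : 0 ≤ Real.sin (b/2+b) / (b/2+b) := by
        apply div_nonneg _ (by linarith)
        exact Real.sin_nonneg_of_nonneg_of_le_pi (by linarith) (by linarith)
      exact pow_lt_pow_left₀ hlt hnn (by norm_num)
  · -- large b
    have hπb : π / 2 < b := by linarith
    have hπ : 0 < π := Real.pi_pos
    have h1 : (∫ x in b..(2*b), sincSq x) ≤ ∫ x in b..(2*b), x ^ (-2 : ℤ) := by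
      apply intervalIntegral.integral_mono_on (by linarith) (hint b (2*b))
      · apply intervalIntegral.intervalIntegrable_zpow
        right
        rw [Set.uIcc_of_le (by linarith)]
        intro h; exact absurd h.1 (by linarith)
      · intro x hx
        have hx0 : 0 < x := lt_of_lt_of_le hb hx.1
        have : sincSq x = Real.sin x ^ 2 / x ^ 2 := by
          simp [sincSq, if_neg (ne_of_gt hx0), div_pow]
        have hx2 : x ^ (-2 : ℤ) = (x ^ 2)⁻¹ := by
          rw [zpow_neg, zpow_two, sq]
        rw [this, hx2, div_le_iff₀ (by positivity), inv_mul_cancel₀ (by positivity)]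
        exact Real.sin_sq_le_one x
    have h2 : (∫ x in b..(2*b), x ^ (-2:ℤ)) = (2*b)⁻¹ := by
      rw [integral_zpow]
      · norm_num
        ring
      · right
        constructor
        · norm_num
        · rw [Set.uIcc_of_le (by linarith)]
          intro h; exact absurd h.1 (by linarith)
    have h3 : (2*b)⁻¹ < π/4 := by
      have : (2*b)⁻¹ < π⁻¹ := by
        apply inv_strictAnti₀ hπ
        linarith
      have hπ2 : π⁻¹ < π/4 := by
        rw [inv_lt_iff_one_lt_mul₀ hπ]
        nlinarith [Real.pi_gt_three]
      linarith
    have h4 : (π/4 : ℝ) = ∫ x in (0:ℝ)..(π/2), Real.cos x ^ 2 := by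
      rw [integral_cos_sq]
      simp [Real.cos_pi_div_two]
      ring
    have h5 : (∫ x in (0:ℝ)..(π/2), Real.cos x ^ 2) ≤ ∫ x in (0:ℝ)..(π/2), sincSq x := by
      apply intervalIntegral.integral_mono_on (by linarith)
        ((Real.continuous_cos.pow 2).intervalIntegrable _ _) (hint 0 (π/2))
      intro x hx
      rcases eq_or_lt_of_le hx.1 with rfl | hx0
      · simp [sincSq]
      · have hxπ : x < π := by linarith [hx.2]
        have := mul_cos_lt_sin hx0 hxπ
        have hcnn : 0 ≤ Real.cos x := Real.cos_nonneg_of_mem_Icc ⟨by linarith, hx.2⟩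
        have hle : Real.cos x ≤ Real.sin x / x := by
          rw [le_div_iff₀ hx0]; nlinarith
        simp only [sincSq, if_neg (ne_of_gt hx0)]
        exact pow_le_pow_left₀ hcnn hle 2
    have h6 : (∫ x in (0:ℝ)..(π/2), sincSq x) ≤ ∫ x in (0:ℝ)..b, sincSq x := by
      apply intervalIntegral.integral_mono_interval le_rfl (by linarith) (by linarith)
        _ (hint 0 b)
      filter_upwards with x using sincSq_nonneg x
    linarith
end

section
/- Let g(z) = (z − α)(z − β) f(z) where α = e^{ia}, β = e^{−ia}, a ∈ (0,1), and f is a polynomial with all coefficients of absolute value at most 1 (of any degree). Then for every z on the chord I₀ joining α and β, |g(z)| ≤ 2/sin(a). -/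
/-!
On the chord, `(z - α) (z - β) = 1 - |z|²` is real and nonnegative, so the left-hand side equals
`(1 + |z|) · (1 - |z|) |f(z)|`. Comparing `f(z)` termwise with the geometric series in `|z|` gives
`(1 - |z|) |f(z)| ≤ 1`, hence the bound `2 ≤ 2 / sin a`.
-/

open Complex Polynomial
open scoped ComplexConjugate

lemma Polynomial.one_sub_norm_mul_norm_eval_le {R : Type*} [NormedRing R] [NormOneClass R]
    (f : R[X]) (hf : ∀ i, ‖f.coeff i‖ ≤ 1) (z : R) : (1 - ‖z‖) * ‖f.eval z‖ ≤ 1 := by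
  rcases le_or_gt 0 (1 - ‖z‖) with hz | hz
  · have hsum : ‖f.eval z‖ ≤ ∑ i ∈ Finset.range (f.natDegree + 1), ‖z‖ ^ i := by
      rw [eval_eq_sum_range]
      refine (norm_sum_le _ _).trans (Finset.sum_le_sum fun i _ => ?_)
      calc ‖f.coeff i * z ^ i‖ ≤ ‖f.coeff i‖ * ‖z‖ ^ i :=
            (norm_mul_le _ _).trans (by gcongr; exact norm_pow_le z i)
        _ ≤ ‖z‖ ^ i := mul_le_of_le_one_left (by positivity) (hf i)
    calc (1 - ‖z‖) * ‖f.eval z‖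
        ≤ (1 - ‖z‖) * ∑ i ∈ Finset.range (f.natDegree + 1), ‖z‖ ^ i := by gcongr
      _ = 1 - ‖z‖ ^ (f.natDegree + 1) := mul_neg_geom_sum _ _
      _ ≤ 1 := sub_le_self _ (by positivity)
  · nlinarith [norm_nonneg (f.eval z)]

/-- Both sides are `y² - u²` for `α = x + iy`, `z = x + iu`. -/
lemma Complex.sub_mul_sub_conj_eq_one_sub_norm_sq {α z : ℂ} (hα : ‖α‖ = 1) (hz : z.re = α.re) :
    (z - α) * (z - conj α) = ((1 - ‖z‖ ^ 2 : ℝ) : ℂ) := by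
  have hα' : α.im ^ 2 = 1 - α.re ^ 2 := by rw [← sq_norm_sub_sq_re, hα]; ring
  have hz' : ‖z‖ ^ 2 = z.re ^ 2 + z.im ^ 2 := by linarith [sq_norm_sub_sq_re z]
  rw [hz']
  apply Complex.ext
  · simp only [mul_re, sub_re, sub_im, conj_re, conj_im, hz, ofReal_re]
    linear_combination hα'
  · simp [hz, sq]

lemma Complex.re_eq_and_norm_le_one_of_mem_chord {α z : ℂ} (hα : ‖α‖ = 1) {t : ℝ}
    (ht : t ∈ Set.Icc (0 : ℝ) 1) (hz : z = t • α + (1 - t) • conj α) :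
    z.re = α.re ∧ ‖z‖ ≤ 1 := by
  subst hz
  refine ⟨by simp only [add_re, smul_re, conj_re, smul_eq_mul]; ring, ?_⟩
  calc ‖t • α + (1 - t) • conj α‖ ≤ ‖t • α‖ + ‖(1 - t) • conj α‖ := norm_add_le _ _
    _ = 1 := by
      rw [norm_smul, norm_smul, norm_conj, hα, Real.norm_of_nonneg ht.1,
        Real.norm_of_nonneg (sub_nonneg.2 ht.2)]
      ring

lemma Complex.norm_sub_mul_sub_conj_mul_eval_le_two {α z : ℂ} (hα : ‖α‖ = 1)
    (hre : z.re = α.re) (hz : ‖z‖ ≤ 1) (f : ℂ[X]) (hf : ∀ i, ‖f.coeff i‖ ≤ 1) :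
    ‖(z - α) * (z - conj α) * f.eval z‖ ≤ 2 := by
  have hf' := f.one_sub_norm_mul_norm_eval_le hf z
  rw [norm_mul, sub_mul_sub_conj_eq_one_sub_norm_sq hα hre, norm_real,
    Real.norm_of_nonneg (by nlinarith [norm_nonneg z])]
  calc (1 - ‖z‖ ^ 2) * ‖f.eval z‖ = (1 + ‖z‖) * ((1 - ‖z‖) * ‖f.eval z‖) := by ring
    _ ≤ (1 + ‖z‖) * 1 := by gcongr
    _ ≤ 2 := by linarith

theorem chord_bound (a : ℝ) (ha : a ∈ Set.Ioo (0:ℝ) 1)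
    (α β : ℂ) (hα : α = Complex.exp (Complex.I * a)) (hβ : β = Complex.exp (-Complex.I * a))
    (f : Polynomial ℂ) (hf : ∀ i, ‖f.coeff i‖ ≤ 1)
    (z : ℂ) (hz : ∃ t : ℝ, t ∈ Set.Icc (0:ℝ) 1 ∧ z = t • α + (1 - t) • β) :
    ‖(z - α) * (z - β) * f.eval z‖ ≤ 2 / Real.sin a := by
  obtain ⟨t, ht, hzt⟩ := hz
  have hβα : β = conj α := by
    rw [hα, hβ, ← exp_conj, map_mul, conj_I, conj_ofReal, neg_mul]
  have hα1 : ‖α‖ = 1 := by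
    rw [hα, mul_comm]
    exact norm_exp_ofReal_mul_I a
  have hsin : 0 < Real.sin a :=
    Real.sin_pos_of_pos_of_lt_pi ha.1 (ha.2.trans (by linarith [Real.pi_gt_three]))
  subst hβα
  obtain ⟨hre, hz1⟩ := re_eq_and_norm_le_one_of_mem_chord hα1 ht hzt
  calc ‖(z - α) * (z - conj α) * f.eval z‖ ≤ 2 :=
        norm_sub_mul_sub_conj_mul_eval_le_two hα1 hre hz1 f hf
    _ ≤ 2 / Real.sin a := le_div_self zero_le_two hsin (Real.sin_le_one a)
end

section
/- Single-bit trace identity: let x ∈ {0,1}^n, q ∈ (0,1), p = 1 − q, and let U be a random trace of x obtained by deleting each bit independently with probability q. Then for every complex z, E_x[ p^{−1} ∑_{j=0}^{n−1} 1_{U_j = 1} ((z − q)/p)^j ] = ∑_{k=0}^{n−1} 1_{x_k = 1} z^k, where U_j is defined to be 2 (so 1_{U_j=1} = 0) if j ≥ |U|. -/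
/-!
Induct on `n`, conditioning on whether the last index `n` survives in `S ⊆ {0, …, n}`. If it
is deleted, the trace is unchanged; if it survives, it is appended to the trace at position `#S`
and contributes `w ^ #S` when `x n = 1`. Averaging over `S ⊆ {0, …, n - 1}`, the old terms keep
their weight `p + q = 1` and the new one has weight `p (p w + q) ^ n` by the binomial theorem.
For `w = (z - q) / p` this is `p z ^ n`, and the factor `p⁻¹` cancels `p`.
-/

open Finset

theorem Finset.sort_insert_of_forall_lt {α : Type*} [LinearOrder α] {S : Finset α} {a : α}
    (h : ∀ b ∈ S, b < a) :
    (insert a S).sort (· ≤ ·) = S.sort (· ≤ ·) ++ [a] := by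
  have ha : a ∉ S := fun haS => (h a haS).false
  have hset : (S.sort (· ≤ ·) ++ [a]).toFinset = insert a S := by
    ext; simp
  rw [← hset, List.toFinset_sort]
  · refine List.pairwise_append.2 ⟨S.pairwise_sort _, List.pairwise_singleton _ _, ?_⟩
    intro b hb c hc
    rw [List.mem_singleton.1 hc]
    exact (h b ((mem_sort _).1 hb)).le
  · exact List.nodup_append.2 ⟨S.sort_nodup _, List.nodup_singleton a, by simpa using ha⟩

variable {R : Type*} [CommSemiring R]

def onePositionsSum (L : List ℕ) (w : R) : R :=
  ∑ j ∈ range L.length, if L.getD j 2 = 1 then w ^ j else 0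

theorem sum_range_getD_eq_onePositionsSum {L : List ℕ} {m : ℕ} (h : L.length ≤ m) (w : R) :
    ∑ j ∈ range m, (if L.getD j 2 = 1 then w ^ j else 0) = onePositionsSum L w := by
  obtain ⟨d, rfl⟩ := Nat.exists_eq_add_of_le h
  rw [sum_range_add, onePositionsSum, sum_eq_zero (s := range d) fun j _ => ?_, add_zero]
  rw [List.getD_eq_default _ _ (by omega)]
  simp

theorem onePositionsSum_append_singleton (L : List ℕ) (a : ℕ) (w : R) :
    onePositionsSum (L ++ [a]) w = onePositionsSum L w + if a = 1 then w ^ L.length else 0 := by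
  rw [onePositionsSum, List.length_append, List.length_singleton, sum_range_succ,
    List.getD_append_right _ _ _ _ le_rfl, Nat.sub_self]
  congr 1
  exact sum_congr rfl fun j hj => by rw [List.getD_append _ _ _ _ (mem_range.1 hj)]

theorem onePositionsSum_sort_insert_of_forall_lt (x : ℕ → ℕ) {S : Finset ℕ} {n : ℕ}
    (h : ∀ b ∈ S, b < n) (w : R) :
    onePositionsSum (((insert n S).sort (· ≤ ·)).map x) w =
      onePositionsSum ((S.sort (· ≤ ·)).map x) w + if x n = 1 then w ^ #S else 0 := by
  rw [sort_insert_of_forall_lt h, List.map_append, List.map_singleton,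
    onePositionsSum_append_singleton, List.length_map, length_sort]

theorem sum_powerset_range_succ_weighted (P Q : R) (n : ℕ) (F : Finset ℕ → R) :
    ∑ S ∈ (range (n + 1)).powerset, P ^ #S * Q ^ (n + 1 - #S) * F S =
      ∑ S ∈ (range n).powerset, P ^ #S * Q ^ (n - #S) * (Q * F S + P * F (insert n S)) := by
  rw [range_add_one, sum_powerset_insert notMem_range_self, ← sum_add_distrib]
  refine sum_congr rfl fun S hS => ?_
  have hnS : n ∉ S := fun h => notMem_range_self (mem_powerset.1 hS h)
  have hcard : #S ≤ n := by simpa using card_le_card (mem_powerset.1 hS)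
  rw [card_insert_of_notMem hnS, Nat.sub_add_comm hcard, Nat.add_sub_add_right]
  ring

theorem sum_powerset_range_weighted_onePositionsSum {P Q : R} (hPQ : P + Q = 1)
    (x : ℕ → ℕ) (w : R) (n : ℕ) :
    ∑ S ∈ (range n).powerset,
        P ^ #S * Q ^ (n - #S) * onePositionsSum ((S.sort (· ≤ ·)).map x) w =
      P * ∑ k ∈ range n, if x k = 1 then (P * w + Q) ^ k else 0 := by
  induction n with
  | zero => simp [onePositionsSum]
  | succ n ih =>
    have hbinom : ∑ S ∈ (range n).powerset,
        P ^ #S * Q ^ (n - #S) * (if x n = 1 then w ^ #S else 0) =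
          if x n = 1 then (P * w + Q) ^ n else 0 := by
      split_ifs
      · simpa [mul_pow, mul_right_comm] using sum_pow_mul_eq_add_pow (P * w) Q (range n)
      · simp
    calc _ = ∑ S ∈ (range n).powerset,
              P ^ #S * Q ^ (n - #S) * onePositionsSum ((S.sort (· ≤ ·)).map x) w +
            P * ∑ S ∈ (range n).powerset,
              P ^ #S * Q ^ (n - #S) * (if x n = 1 then w ^ #S else 0) := by
          rw [sum_powerset_range_succ_weighted, mul_sum, ← sum_add_distrib]
          refine sum_congr rfl fun S hS => ?_
          rw [onePositionsSum_sort_insert_of_forall_lt x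
            (fun b hb => mem_range.1 (mem_powerset.1 hS hb))]
          calc _ = P ^ #S * Q ^ (n - #S) *
                  ((P + Q) * onePositionsSum ((S.sort (· ≤ ·)).map x) w +
                    P * if x n = 1 then w ^ #S else 0) := by ring
            _ = _ := by rw [hPQ]; ring
      _ = P * ∑ k ∈ range (n + 1), if x k = 1 then (P * w + Q) ^ k else 0 := by
          rw [ih, hbinom, sum_range_succ, mul_add]

theorem single_bit_trace_identity_general (n : ℕ) (q : ℝ) (hq : q ∈ Set.Ioo (0:ℝ) 1)
    (p : ℝ) (hp : p = 1 - q) (x : ℕ → ℕ) (z : ℂ) :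
    ∑ S ∈ (Finset.range n).powerset,
        ((p : ℂ) ^ S.card * (q : ℂ) ^ (n - S.card)) *
          ((p : ℂ)⁻¹ * ∑ j ∈ Finset.range n,
            if ((S.sort (· ≤ ·)).map x).getD j 2 = 1 then ((z - q) / p) ^ j else 0) =
      ∑ k ∈ Finset.range n, if x k = 1 then z ^ k else 0 := by
  have hp0 : (p : ℂ) ≠ 0 := by
    rw [hp]; exact_mod_cast (sub_pos.2 hq.2).ne'
  have hpq : (p : ℂ) + q = 1 := by rw [hp]; push_cast; ring
  have hz : (p : ℂ) * ((z - q) / p) + q = z := by field_simp; ring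
  calc _ = (p : ℂ)⁻¹ * ∑ S ∈ (range n).powerset, (p : ℂ) ^ #S * (q : ℂ) ^ (n - #S) *
          onePositionsSum ((S.sort (· ≤ ·)).map x) ((z - q) / p) := by
        rw [mul_sum]
        refine sum_congr rfl fun S hS => ?_
        rw [sum_range_getD_eq_onePositionsSum
          (by simpa using card_le_card (mem_powerset.1 hS))]
        ring
    _ = _ := by
        rw [sum_powerset_range_weighted_onePositionsSum hpq, hz, inv_mul_cancel_left₀ hp0]

theorem single_bit_trace_identity (n : ℕ) (q : ℝ) (hq : q ∈ Set.Ioo (0:ℝ) 1)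
    (p : ℝ) (hp : p = 1 - q) (x : ℕ → ℕ) (hx : ∀ k, x k ≤ 1) (z : ℂ) :
    ∑ S ∈ (Finset.range n).powerset,
        ((p : ℂ) ^ S.card * (q : ℂ) ^ (n - S.card)) *
          ((p : ℂ)⁻¹ * ∑ j ∈ Finset.range n,
            if ((S.sort (· ≤ ·)).map x).getD j 2 = 1 then ((z - q) / p) ^ j else 0) =
      ∑ k ∈ Finset.range n, if x k = 1 then z ^ k else 0 :=
  single_bit_trace_identity_general n q hq p hp x z
end

section
/- Let F be a finite (or compact) family of real Lipschitz functions on [0,1], uniformly bounded by C, such that ∫₀^{1/2} f < ∫_{1/2}^1 f for every f ∈ F. Then there exist M and ε > 0 such that for all integers m > M, all integers m* with (1/2 − ε)m < m* < (1/2 + ε)m, and all f ∈ F: ∑_{j=1}^{m*} f(j/m)/(log(j+3))² < ∑_{j=m*+1}^{m} f(j/m)/(log(j+3))². -/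
/-!
Write `w j = (log (j + 3))⁻²` as `w m + (w j - w m)`. The constant part reduces the comparison to
one of plain Riemann sums, which by the Lipschitz bound are within `K` of `m` times the integrals;
it contributes about `w m * m * (∫_{1/2}^1 f - ∫_0^{1/2} f)`, up to an `O(ε)` error from moving the
split point `m*/m` away from `1/2`. The fluctuation `∑_{j ≤ m} (w j - w m)` is `o(m w m)`: as soon
as `j + 3 ≥ (m + 3)^θ` we have `log (j + 3) ≥ θ log (m + 3)`, and only `(m + 3)^θ = o(m / log² m)`
indices lie below that threshold. Finiteness of `F` makes `M` and `ε` uniform over `F`.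
-/

open Finset Filter
open scoped NNReal Topology

theorem abs_integral_sub_mul_right_le_of_lipschitzOnWith {f : ℝ → ℝ} {K : ℝ≥0} {a b : ℝ}
    (hab : a ≤ b) (hf : LipschitzOnWith K f (Set.Icc a b)) :
    |(∫ x in a..b, f x) - (b - a) * f b| ≤ K * (b - a) ^ 2 := by
  have hint : IntervalIntegrable f MeasureTheory.volume a b :=
    hf.continuousOn.intervalIntegrable_of_Icc hab
  have hsub : (∫ x in a..b, f x) - (b - a) * f b = ∫ x in a..b, (f x - f b) := by
    rw [intervalIntegral.integral_sub hint intervalIntegrable_const,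
      intervalIntegral.integral_const, smul_eq_mul]
  rw [hsub, ← Real.norm_eq_abs, sq, ← mul_assoc, ← abs_of_nonneg (sub_nonneg.2 hab)]
  refine intervalIntegral.norm_integral_le_of_norm_le_const fun x hx => ?_
  rw [Set.uIoc_of_le hab] at hx
  have hx' : x ∈ Set.Icc a b := Set.Ioc_subset_Icc_self hx
  calc ‖f x - f b‖ = dist (f x) (f b) := (dist_eq_norm _ _).symm
    _ ≤ K * dist x b := hf.dist_le_mul x hx' b (Set.right_mem_Icc.2 hab)
    _ ≤ K * |b - a| := by
        rw [Real.dist_eq, abs_sub_comm, abs_of_nonneg (sub_nonneg.2 hx.2),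
          abs_of_nonneg (sub_nonneg.2 hab)]
        gcongr
        linarith [hx.1]

theorem abs_mul_sum_Ioc_sub_integral_le_of_lipschitzOnWith {f : ℝ → ℝ} {K : ℝ≥0} {h : ℝ}
    (hh : 0 ≤ h) {p q : ℕ} (hpq : p ≤ q) (hf : LipschitzOnWith K f (Set.Icc (p * h) (q * h))) :
    |h * ∑ j ∈ Ioc p q, f (j * h) - ∫ x in p * h..q * h, f x| ≤ K * h ^ 2 * (q - p) := by
  induction q, hpq using Nat.le_induction with
  | base => simp
  | succ q hpq ih =>
    have hmono : ∀ {i j : ℕ}, i ≤ j → (i : ℝ) * h ≤ j * h := fun hij =>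
      mul_le_mul_of_nonneg_right (Nat.cast_le.2 hij) hh
    have hf_left : LipschitzOnWith K f (Set.Icc (p * h) (q * h)) :=
      hf.mono (Set.Icc_subset_Icc_right (hmono q.le_succ))
    have hf_right : LipschitzOnWith K f (Set.Icc (q * h) ((q + 1 : ℕ) * h)) :=
      hf.mono (Set.Icc_subset_Icc_left (hmono hpq))
    have hstep := abs_integral_sub_mul_right_le_of_lipschitzOnWith (hmono q.le_succ) hf_right
    rw [← intervalIntegral.integral_add_adjacent_intervals
      (hf_left.continuousOn.intervalIntegrable_of_Icc (hmono hpq))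
      (hf_right.continuousOn.intervalIntegrable_of_Icc (hmono q.le_succ)),
      sum_Ioc_succ_top hpq]
    push_cast at hstep ⊢
    calc _ = |(h * ∑ j ∈ Ioc p q, f (j * h) - ∫ x in p * h..q * h, f x)
          - ((∫ x in q * h..(q + 1) * h, f x) - ((q + 1) * h - q * h) * f ((q + 1) * h))| := by
            congr 1; ring
      _ ≤ K * h ^ 2 * (q - p) + K * ((q + 1) * h - q * h) ^ 2 :=
          (abs_sub _ _).trans (add_le_add (ih hf_left) hstep)
      _ = K * h ^ 2 * (q + 1 - p) := by ring

theorem sub_le_sum_Ioc_sub_sum_Ioc_of_lipschitzOnWith {f : ℝ → ℝ} {K : ℝ≥0}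
    (hf : LipschitzOnWith K f (Set.Icc 0 1)) {n m : ℕ} (hm : 0 < m) (hnm : n ≤ m) :
    m * ((∫ x in n / m..1, f x) - ∫ x in 0..n / m, f x) - K ≤
      ∑ j ∈ Ioc n m, f (j / m) - ∑ j ∈ Ioc 0 n, f (j / m) := by
  have hm' : (0 : ℝ) < m := Nat.cast_pos.2 hm
  have hcast : ∀ j : ℕ, (j : ℝ) * (m : ℝ)⁻¹ = j / m := fun j => (div_eq_mul_inv _ _).symm
  have hsub : ∀ {i j : ℕ}, j ≤ m → Set.Icc ((i : ℝ) * (m : ℝ)⁻¹) (j * (m : ℝ)⁻¹) ⊆ Set.Icc 0 1 :=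
    fun hj => Set.Icc_subset_Icc (by positivity)
      (by rw [hcast, div_le_one hm']; exact_mod_cast hj)
  have hleft := abs_mul_sum_Ioc_sub_integral_le_of_lipschitzOnWith (inv_nonneg.2 hm'.le)
    n.zero_le (hf.mono (hsub hnm))
  have hright := abs_mul_sum_Ioc_sub_integral_le_of_lipschitzOnWith (inv_nonneg.2 hm'.le)
    hnm (hf.mono (hsub le_rfl))
  simp only [hcast, Nat.cast_zero, zero_mul, div_self hm'.ne', sub_zero] at hleft hright
  have hK : (K : ℝ) * (m : ℝ)⁻¹ ^ 2 * m = K * (m : ℝ)⁻¹ := by field_simp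
  have hgap : (∫ x in n / m..1, f x) - ∫ x in 0..n / m, f x ≤
      (m : ℝ)⁻¹ * (∑ j ∈ Ioc n m, f (j / m) - ∑ j ∈ Ioc 0 n, f (j / m)) + K * (m : ℝ)⁻¹ := by
    linarith [(abs_le.1 hleft).2, (abs_le.1 hright).1]
  calc _ ≤ m * ((m : ℝ)⁻¹ * (∑ j ∈ Ioc n m, f (j / m) - ∑ j ∈ Ioc 0 n, f (j / m))
          + K * (m : ℝ)⁻¹) - K := by gcongr
    _ = _ := by field_simp; ring

theorem integral_split_at_half_sub_le {f : ℝ → ℝ} {C t : ℝ} (hf : ContinuousOn f (Set.Icc 0 1))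
    (hbd : ∀ x ∈ Set.Icc (0 : ℝ) 1, |f x| ≤ C) (ht : t ∈ Set.Icc (0 : ℝ) 1) :
    (∫ x in (1 / 2 : ℝ)..1, f x) - (∫ x in (0 : ℝ)..1 / 2, f x) - 2 * (C * |t - 1 / 2|) ≤
      (∫ x in t..1, f x) - ∫ x in (0 : ℝ)..t, f x := by
  have hI : ∀ {a b : ℝ}, a ∈ Set.Icc (0 : ℝ) 1 → b ∈ Set.Icc (0 : ℝ) 1 →
      IntervalIntegrable f MeasureTheory.volume a b := fun ha hb =>
    (hf.mono (Set.uIcc_subset_Icc ha hb)).intervalIntegrable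
  have h0 : (0 : ℝ) ∈ Set.Icc (0 : ℝ) 1 := Set.left_mem_Icc.2 zero_le_one
  have h1 : (1 : ℝ) ∈ Set.Icc (0 : ℝ) 1 := Set.right_mem_Icc.2 zero_le_one
  have hhalf : (1 / 2 : ℝ) ∈ Set.Icc (0 : ℝ) 1 := ⟨by norm_num, by norm_num⟩
  have hmid : ‖∫ x in (1 / 2 : ℝ)..t, f x‖ ≤ C * |t - 1 / 2| :=
    intervalIntegral.norm_integral_le_of_norm_le_const fun x hx =>
      hbd x (Set.uIcc_subset_Icc hhalf ht (Set.uIoc_subset_uIcc hx))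
  rw [← intervalIntegral.integral_add_adjacent_intervals (hI h0 hhalf) (hI hhalf ht),
    ← intervalIntegral.integral_add_adjacent_intervals (hI ht hhalf) (hI hhalf h1),
    intervalIntegral.integral_symm (1 / 2 : ℝ) t]
  linarith [le_abs_self (∫ x in (1 / 2 : ℝ)..t, f x), Real.norm_eq_abs (∫ x in (1 / 2 : ℝ)..t, f x)]

noncomputable def logWeight (j : ℕ) : ℝ := (Real.log (j + 3) ^ 2)⁻¹

theorem one_lt_log_natCast_add_three (j : ℕ) : 1 < Real.log (j + 3) := by
  rw [Real.lt_log_iff_exp_lt (by positivity)]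
  linarith [Real.exp_one_lt_d9, (Nat.cast_nonneg j : (0 : ℝ) ≤ j)]

theorem logWeight_pos (j : ℕ) : 0 < logWeight j := by
  have := one_lt_log_natCast_add_three j
  unfold logWeight; positivity

theorem logWeight_le_one (j : ℕ) : logWeight j ≤ 1 :=
  inv_le_one_of_one_le₀ (one_le_pow₀ (one_lt_log_natCast_add_three j).le)

theorem logWeight_antitone : Antitone logWeight := fun i j hij => by
  have hi := one_lt_log_natCast_add_three i
  unfold logWeight
  gcongr

theorem logWeight_le_of_rpow_le {θ : ℝ} (hθ : 0 < θ) {j m : ℕ}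
    (h : ((m : ℝ) + 3) ^ θ ≤ j + 3) : logWeight j ≤ (θ ^ 2)⁻¹ * logWeight m := by
  have hm := one_lt_log_natCast_add_three m
  have hlog : θ * Real.log (m + 3) ≤ Real.log (j + 3) := by
    rw [← Real.log_rpow (by positivity)]
    exact Real.log_le_log (by positivity) h
  unfold logWeight
  rw [← mul_inv, ← mul_pow]
  gcongr

theorem eventually_rpow_mul_log_sq_le {θ η : ℝ} (hθ : θ < 1) (hη : 0 < η) :
    ∀ᶠ x : ℝ in atTop, x ^ θ * Real.log x ^ 2 ≤ η * x := by
  filter_upwards [(isLittleO_log_rpow_rpow_atTop 2 (sub_pos.2 hθ)).bound hη,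
    eventually_gt_atTop 0] with x hx hx0
  rw [Real.rpow_two, Real.norm_of_nonneg (by positivity),
    Real.norm_of_nonneg (by positivity)] at hx
  calc x ^ θ * Real.log x ^ 2 ≤ x ^ θ * (η * x ^ (1 - θ)) := by gcongr
    _ = η * x := by rw [mul_left_comm, ← Real.rpow_add hx0, add_sub_cancel, Real.rpow_one]

theorem eventually_sum_logWeight_sub_le {δ : ℝ} (hδ : 0 < δ) :
    ∀ᶠ m : ℕ in atTop, ∑ j ∈ Ioc 0 m, (logWeight j - logWeight m) ≤ δ * (m * logWeight m) := by
  -- `θ⁻² = 1 + δ / 2`, so indices above `(m + 3)^θ` have `w j - w m ≤ δ / 2 * w m`.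
  set θ : ℝ := (Real.sqrt (1 + δ / 2))⁻¹
  have hθ0 : 0 < θ := by positivity
  have hθ1 : θ < 1 := inv_lt_one_of_one_lt₀ (Real.lt_sqrt zero_le_one |>.2 (by linarith))
  have hθsq : (θ ^ 2)⁻¹ = 1 + δ / 2 := by rw [inv_pow, inv_inv, Real.sq_sqrt (by positivity)]
  have hcount : ∀ᶠ m : ℕ in atTop, ((m : ℝ) + 3) ^ θ ≤ δ / 2 * (m * logWeight m) := by
    filter_upwards [(tendsto_atTop_add_const_right atTop 3 tendsto_natCast_atTop_atTop).eventually
      (eventually_rpow_mul_log_sq_le hθ1 (η := δ / 8) (by positivity)),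
      eventually_ge_atTop 1] with m hm hm1
    have hL := one_lt_log_natCast_add_three m
    have hm1' : (1 : ℝ) ≤ m := by exact_mod_cast hm1
    rw [logWeight, ← mul_assoc, ← div_eq_mul_inv, le_div_iff₀ (by positivity)]
    nlinarith
  filter_upwards [hcount] with m hm
  set T : ℝ := ((m : ℝ) + 3) ^ θ
  have hpoint : ∀ j ∈ Ioc 0 m, logWeight j - logWeight m ≤
      (if (j : ℝ) < T then 1 else 0) + δ / 2 * logWeight m := by
    intro j _
    have hm := logWeight_pos m
    split_ifs with hj
    · nlinarith [logWeight_le_one j]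
    · have := logWeight_le_of_rpow_le hθ0 (j := j) (m := m) (by linarith [not_lt.1 hj])
      rw [hθsq] at this
      linarith
  calc ∑ j ∈ Ioc 0 m, (logWeight j - logWeight m)
      ≤ ∑ j ∈ Ioc 0 m, ((if (j : ℝ) < T then 1 else 0) + δ / 2 * logWeight m) :=
        sum_le_sum hpoint
    _ = ((Ioc 0 m).filter fun j : ℕ => (j : ℝ) < T).card + m * (δ / 2 * logWeight m) := by
        rw [sum_add_distrib, sum_boole, sum_const, Nat.card_Ioc, nsmul_eq_mul, Nat.sub_zero]
    _ ≤ (Ioc 0 ⌊T⌋₊).card + m * (δ / 2 * logWeight m) := by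
        gcongr
        intro j hj
        simp only [mem_filter, mem_Ioc] at hj ⊢
        exact ⟨hj.1.1, Nat.le_floor hj.2.le⟩
    _ ≤ T + m * (δ / 2 * logWeight m) := by
        rw [Nat.card_Ioc, Nat.sub_zero]
        gcongr
        exact Nat.floor_le (by positivity)
    _ ≤ δ * (m * logWeight m) := by linarith

theorem abs_sum_mul_le_mul_sum {ι : Type*} {s : Finset ι} {g v : ι → ℝ} {C : ℝ}
    (hg : ∀ i ∈ s, |g i| ≤ C) (hv : ∀ i ∈ s, 0 ≤ v i) :
    |∑ i ∈ s, g i * v i| ≤ C * ∑ i ∈ s, v i := by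
  rw [mul_sum]
  refine (abs_sum_le_sum_abs _ _).trans (sum_le_sum fun i hi => ?_)
  rw [abs_mul, abs_of_nonneg (hv i hi)]
  exact mul_le_mul_of_nonneg_right (hg i hi) (hv i hi)

theorem sub_le_sum_Ioc_mul_sub_sum_Ioc_mul {g w : ℕ → ℝ} {C : ℝ} {n m : ℕ} (hnm : n ≤ m)
    (hg : ∀ j ∈ Ioc 0 m, |g j| ≤ C) (hw : ∀ j ∈ Ioc 0 m, w m ≤ w j) :
    w m * (∑ j ∈ Ioc n m, g j - ∑ j ∈ Ioc 0 n, g j) - C * ∑ j ∈ Ioc 0 m, (w j - w m) ≤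
      ∑ j ∈ Ioc n m, g j * w j - ∑ j ∈ Ioc 0 n, g j * w j := by
  have hsplit : ∀ s : Finset ℕ,
      ∑ j ∈ s, g j * w j = w m * ∑ j ∈ s, g j + ∑ j ∈ s, g j * (w j - w m) := fun s => by
    rw [mul_sum, ← sum_add_distrib]
    exact sum_congr rfl fun j _ => by ring
  have hleft : Ioc 0 n ⊆ Ioc 0 m := Ioc_subset_Ioc_right hnm
  have hright : Ioc n m ⊆ Ioc 0 m := Ioc_subset_Ioc_left n.zero_le
  have hA := abs_sum_mul_le_mul_sum (v := fun j => w j - w m)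
    (fun j hj => hg j (hleft hj)) (fun j hj => sub_nonneg.2 (hw j (hleft hj)))
  have hB := abs_sum_mul_le_mul_sum (v := fun j => w j - w m)
    (fun j hj => hg j (hright hj)) (fun j hj => sub_nonneg.2 (hw j (hright hj)))
  rw [← sum_Ioc_consecutive _ n.zero_le hnm, hsplit, hsplit]
  linarith [le_abs_self (∑ j ∈ Ioc 0 n, g j * (w j - w m)),
    neg_abs_le (∑ j ∈ Ioc n m, g j * (w j - w m))]

theorem sum_Ioc_mul_logWeight_lt {f : ℝ → ℝ} {C a b : ℝ} {K : ℝ≥0} {n m : ℕ} (hm : 0 < m)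
    (hnm : n ≤ m) (hbd : ∀ x ∈ Set.Icc (0 : ℝ) 1, |f x| ≤ C)
    (hlip : LipschitzOnWith K f (Set.Icc 0 1))
    (hgap : a ≤ (∫ x in (n / m : ℝ)..1, f x) - ∫ x in (0 : ℝ)..n / m, f x)
    (hE : C * ∑ j ∈ Ioc 0 m, (logWeight j - logWeight m) ≤ b * (m * logWeight m))
    (hK : K + b * m < a * m) :
    ∑ j ∈ Ioc 0 n, f (j / m) * logWeight j < ∑ j ∈ Ioc n m, f (j / m) * logWeight j := by
  have hm0 : (0 : ℝ) < m := Nat.cast_pos.2 hm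
  have hw := logWeight_pos m
  have hsums : m * a - K ≤ ∑ j ∈ Ioc n m, f (j / m) - ∑ j ∈ Ioc 0 n, f (j / m) := by
    linarith [mul_le_mul_of_nonneg_left hgap hm0.le,
      sub_le_sum_Ioc_sub_sum_Ioc_of_lipschitzOnWith hlip hm hnm]
  have hweights := sub_le_sum_Ioc_mul_sub_sum_Ioc_mul (g := fun j => f (j / m)) (C := C)
    (w := logWeight) hnm
    (fun j hj => hbd _ ⟨by positivity, (div_le_one hm0).2 (by exact_mod_cast (mem_Ioc.1 hj).2)⟩)
    (fun j hj => logWeight_antitone (mem_Ioc.1 hj).2)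
  have hpos : 0 < logWeight m * (a * m - K - b * m) := mul_pos hw (by linarith)
  linarith [mul_le_mul_of_nonneg_left hsums hw.le]

theorem eventually_sum_Icc_div_log_sq_lt {f : ℝ → ℝ} {C : ℝ} {K : ℝ≥0}
    (hbd : ∀ x ∈ Set.Icc (0 : ℝ) 1, |f x| ≤ C) (hlip : LipschitzOnWith K f (Set.Icc 0 1))
    (hint : (∫ x in (0 : ℝ)..(1 / 2), f x) < ∫ x in (1 / 2 : ℝ)..1, f x) :
    ∀ᶠ p : ℕ × ℝ in atTop ×ˢ 𝓝[>] 0, ∀ m : ℕ, p.1 < m → ∀ mstar : ℕ,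
      ((1 / 2 - p.2) * m < mstar ∧ (mstar : ℝ) < (1 / 2 + p.2) * m) →
        ∑ j ∈ Finset.Icc 1 mstar, f (j / m) / (Real.log (j + 3)) ^ 2 <
          ∑ j ∈ Finset.Icc (mstar + 1) m, f (j / m) / (Real.log (j + 3)) ^ 2 := by
  set c := (∫ x in (1 / 2 : ℝ)..1, f x) - ∫ x in (0 : ℝ)..(1 / 2), f x
  have hc : 0 < c := sub_pos.2 hint
  have hC : 0 ≤ C := (abs_nonneg _).trans (hbd 0 (Set.left_mem_Icc.2 zero_le_one))
  obtain ⟨δ, hδ, hCδ⟩ := exists_pos_mul_lt (by positivity : 0 < c / 4) C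
  obtain ⟨η, hη, hCη⟩ := exists_pos_mul_lt (by positivity : 0 < c / 8) C
  obtain ⟨N, hN⟩ := eventually_atTop.1 ((eventually_sum_logWeight_sub_le hδ).and
    (tendsto_natCast_atTop_atTop.eventually_gt_atTop (2 * K / c)))
  filter_upwards [(eventually_ge_atTop N).prod_mk
    (Ioo_mem_nhdsGT (lt_min hη one_half_pos))] with ⟨M, ε⟩ ⟨hM, hε0, hεη⟩ m hm mstar ⟨hlo, hhi⟩
  obtain ⟨hE, hmK⟩ := hN m (by omega)
  have hm0 : (0 : ℝ) < m := by exact_mod_cast (show 0 < m by omega)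
  have hεη' : ε < η := hεη.trans_le (min_le_left _ _)
  have hε2 : ε < 1 / 2 := hεη.trans_le (min_le_right _ _)
  have hnm : mstar ≤ m := by exact_mod_cast (show (mstar : ℝ) ≤ m by nlinarith)
  have ht : |(mstar : ℝ) / m - 1 / 2| ≤ ε := by
    rw [abs_le, le_sub_iff_add_le, sub_le_iff_le_add, le_div_iff₀ hm0, div_le_iff₀ hm0]
    constructor <;> linarith
  have ht01 : (mstar : ℝ) / m ∈ Set.Icc (0 : ℝ) 1 :=
    ⟨by positivity, (div_le_one hm0).2 (by exact_mod_cast hnm)⟩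
  have hgap : 3 * c / 4 ≤ (∫ x in (mstar / m : ℝ)..1, f x) - ∫ x in (0 : ℝ)..mstar / m, f x := by
    have hCt : C * |(mstar : ℝ) / m - 1 / 2| ≤ C * η := by gcongr; linarith
    linarith [integral_split_at_half_sub_le hlip.continuousOn hbd ht01]
  have hCE : C * ∑ j ∈ Ioc 0 m, (logWeight j - logWeight m) ≤ c / 4 * (m * logWeight m) :=
    calc _ ≤ C * (δ * (m * logWeight m)) := mul_le_mul_of_nonneg_left hE hC
      _ = (C * δ) * (m * logWeight m) := by ring
      _ ≤ c / 4 * (m * logWeight m) := by have := logWeight_pos m; gcongr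
  have hK : (K : ℝ) + c / 4 * m < 3 * c / 4 * m := by linarith [(div_lt_iff₀ hc).1 hmK]
  simp only [div_eq_mul_inv (f _)]
  rw [Finset.Icc_add_one_left_eq_Ioc, show Finset.Icc 1 mstar = Ioc 0 mstar from
    Finset.Icc_add_one_left_eq_Ioc 0 mstar]
  exact sum_Ioc_mul_logWeight_lt (by omega) hnm hbd hlip hgap hCE hK

theorem discrete_integral_comparison (F : Finset (ℝ → ℝ)) (C K : ℝ)
    (hbd : ∀ f ∈ F, ∀ x ∈ Set.Icc (0:ℝ) 1, |f x| ≤ C)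
    (hlip : ∀ f ∈ F, LipschitzOnWith (Real.toNNReal K) f (Set.Icc (0:ℝ) 1))
    (hint : ∀ f ∈ F, (∫ x in (0:ℝ)..(1/2), f x) < ∫ x in (1/2:ℝ)..1, f x) :
    ∃ (M : ℕ) (ε : ℝ), 0 < ε ∧
      ∀ m : ℕ, M < m → ∀ mstar : ℕ,
        ((1/2 - ε) * m < mstar ∧ (mstar : ℝ) < (1/2 + ε) * m) →
        ∀ f ∈ F,
          ∑ j ∈ Finset.Icc 1 mstar, f (j / m) / (Real.log (j + 3)) ^ 2 <
            ∑ j ∈ Finset.Icc (mstar + 1) m, f (j / m) / (Real.log (j + 3)) ^ 2 := by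
  have hall := (eventually_all_finset F).2 fun f hf =>
    eventually_sum_Icc_div_log_sq_lt (hbd f hf) (hlip f hf) (hint f hf)
  obtain ⟨⟨M, ε⟩, hε, hM⟩ := ((eventually_mem_nhdsWithin.prod_inr atTop).and hall).exists
  exact ⟨M, ε, hε, fun m hm mstar hwin f hf => hM f hf m hm mstar hwin⟩
end
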